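/- Let k ≥ 2 be an integer, ρ > 0, m ∈ ℝ, s ∈ (0,1). Let b_j = ρ (cos(2πj/k), sin(2πj/k)) and m_j = m for j = 0,…,k-1, and set α = (m/ρ^{4-2s}) · (Γ(2-s)/(2^{s+1} π Γ(s))) · Σ_{l=1}^{k-1} (1 - cos(2πl/k))^{s-1}. Then (b₀,…,b_{k-1}) with intensities (m₀,…,m_{k-1}) solves the rotating system with angular speed α, i.e. for every j: α b_j = -K_s Σ_{i≠j} m_i (b_i - b_j)/|b_i - b_j|^{4-2s}. -/

import Mathlib

open Real Finset RealInnerProductSpace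

noncomputable section

/-- The plane `ℝ²` with the Euclidean norm. -/
abbrev E2 := EuclideanSpace ℝ (Fin 2)

/-- For `a = (a₁, a₂)`, `perp a = a^⊥ = (a₂, -a₁)`. -/
def perp (a : E2) : E2 := !₂[a 1, -(a 0)]

/-- `e₁ = (1,0)`. -/
def e1 : E2 := !₂[1, 0]

/-- `e₂ = (0,1)`. -/
def e2 : E2 := !₂[0, 1]

/-- `K_s = Γ(2-s) / (2^(2s-1) π Γ(s))`. -/
def Ks (s : ℝ) : ℝ := Real.Gamma (2 - s) / (2 ^ (2*s - 1) * Real.pi * Real.Gamma s)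

/-- Counterclockwise rotation of the plane by angle `θ`. -/
def rot (θ : ℝ) (a : E2) : E2 :=
  !₂[Real.cos θ * a 0 - Real.sin θ * a 1, Real.sin θ * a 0 + Real.cos θ * a 1]

/-!
Write `b j = ρ • u(θ j)` with `θ j = 2πj/k` read as an angle, so that `j ↦ θ j` is additive on
`Fin k`. Then `b (j + l) - b j = ρ • ((cos θ_l - 1) • u + sin θ_l • u^⊥)` with `u = u(θ j)`, and
its squared length is `2ρ²(1 - cos θ_l)`. Under `l ↦ -l` the `u^⊥`-components of the forces
cancel, while the radial ones add up to a multiple of `u`, i.e. of `b j`.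
-/

def unitVec (θ : Real.Angle) : E2 := !₂[θ.cos, θ.sin]

lemma unitVec_add_sub (θ φ : Real.Angle) :
    unitVec (θ + φ) - unitVec θ = (φ.cos - 1) • unitVec θ + φ.sin • unitVec (θ + ↑(π / 2)) := by
  simp only [unitVec, Real.Angle.cos_add_pi_div_two, Real.Angle.sin_add_pi_div_two]
  ext i
  fin_cases i <;>
    simp only [Fin.zero_eta, Fin.mk_one, Fin.isValue, PiLp.sub_apply, PiLp.add_apply,
      PiLp.smul_apply, smul_eq_mul, Matrix.cons_val_zero, Matrix.cons_val_one,
      Matrix.cons_val_fin_one, Real.Angle.cos_add, Real.Angle.sin_add] <;>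
    ring

lemma norm_unitVec_add_sub_sq (θ φ : Real.Angle) :
    ‖unitVec (θ + φ) - unitVec θ‖ ^ 2 = 2 * (1 - φ.cos) := by
  simp only [EuclideanSpace.norm_sq_eq, Fin.sum_univ_two, unitVec, PiLp.sub_apply,
    Real.norm_eq_abs, sq_abs, Real.Angle.cos_add, Real.Angle.sin_add, Fin.isValue,
    Matrix.cons_val_zero, Matrix.cons_val_one, Matrix.cons_val_fin_one]
  linear_combination (φ.cos ^ 2 + φ.sin ^ 2 - 2 * φ.cos + 1) * Real.Angle.cos_sq_add_sin_sq θ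
    + Real.Angle.cos_sq_add_sin_sq φ

lemma div_norm_rpow_smul_smul {E : Type*} [NormedAddCommGroup E] [NormedSpace ℝ E] {ρ : ℝ}
    (hρ : 0 < ρ) (m p : ℝ) (v : E) :
    (m / ‖ρ • v‖ ^ p) • (ρ • v) = (ρ ^ (1 - p) * (m / ‖v‖ ^ p)) • v := by
  rw [norm_smul, Real.norm_of_nonneg hρ.le, Real.mul_rpow hρ.le (norm_nonneg _), smul_smul,
    Real.rpow_sub hρ, Real.rpow_one]
  ring_nf

lemma div_rpow_two_mul {x : ℝ} (hx : 0 ≤ x) (m q : ℝ) : m / x ^ (2 * q) = m * (x ^ 2) ^ (-q) := by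
  rw [Real.rpow_neg (sq_nonneg x), Real.rpow_mul hx, Real.rpow_two, div_eq_mul_inv]

lemma mul_two_mul_rpow {x : ℝ} (hx : 0 ≤ x) {s : ℝ} (hs : s ≠ 1) :
    x * (2 * x) ^ (s - 2) = 2 ^ (s - 2) * x ^ (s - 1) := by
  rw [Real.mul_rpow zero_le_two hx, show s - 1 = s - 2 + 1 by ring,
    Real.rpow_add_one' hx (by contrapose! hs; linarith)]
  ring

lemma Ks_mul_two_rpow (s : ℝ) :
    Ks s * 2 ^ (s - 2) = Real.Gamma (2 - s) / (2 ^ (s + 1) * π * Real.Gamma s) := by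
  have h2 : (2 : ℝ) ^ (2 * s - 1) = 2 ^ (s + 1) * 2 ^ (s - 2) := by
    rw [← Real.rpow_add two_pos]; ring_nf
  have h0 : (2 : ℝ) ^ (s - 2) ≠ 0 := (Real.rpow_pos_of_pos two_pos _).ne'
  rw [Ks, h2]
  field_simp

def vertexAngle (k : ℕ) (j : Fin k) : Real.Angle := ↑(2 * π * (j : ℝ) / k)

lemma coe_two_pi_mul_mod_div (n k : ℕ) :
    ((2 * π * ((n % k : ℕ) : ℝ) / k : ℝ) : Real.Angle) = ↑(2 * π * n / k) := by
  rcases eq_or_ne k 0 with rfl | hk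
  · simp
  rw [Real.Angle.angle_eq_iff_two_pi_dvd_sub]
  obtain ⟨q, hq⟩ : ∃ q : ℕ, (n : ℝ) = ((n % k : ℕ) : ℝ) + k * q :=
    ⟨n / k, by exact_mod_cast (Nat.mod_add_div n k).symm⟩
  refine ⟨-(q : ℤ), ?_⟩
  rw [hq]
  push_cast
  field_simp
  ring

lemma vertexAngle_add {k : ℕ} (i j : Fin k) :
    vertexAngle k (i + j) = vertexAngle k i + vertexAngle k j := by
  rw [vertexAngle, Fin.val_add, coe_two_pi_mul_mod_div, vertexAngle, vertexAngle,
    ← Real.Angle.coe_add]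
  push_cast
  ring_nf

lemma vertexAngle_neg {k : ℕ} (j : Fin k) : vertexAngle k (-j) = -vertexAngle k j := by
  have hk : (k : ℝ) ≠ 0 := by exact_mod_cast j.pos.ne'
  rw [vertexAngle, Fin.val_neg', coe_two_pi_mul_mod_div, Nat.cast_sub j.isLt.le, vertexAngle,
    ← Real.Angle.coe_neg, show 2 * π * ((k : ℝ) - j) / k = -(2 * π * j / k) + 2 * π by
      field_simp; ring, Real.Angle.coe_add, Real.Angle.coe_two_pi, add_zero]

lemma sum_mul_sin_vertexAngle_eq_zero {k : ℕ} [NeZero k] (g : ℝ → ℝ) :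
    ∑ l : Fin k, g (vertexAngle k l).cos * (vertexAngle k l).sin = 0 := by
  have h := Equiv.sum_comp (Equiv.neg (Fin k))
    fun l => g (vertexAngle k l).cos * (vertexAngle k l).sin
  simp only [Equiv.neg_apply, vertexAngle_neg, Real.Angle.cos_neg, Real.Angle.sin_neg, mul_neg,
    sum_neg_distrib] at h
  linarith

lemma sum_one_sub_cos_vertexAngle_rpow {k : ℕ} {s : ℝ} (hs : s ≠ 1) :
    ∑ l : Fin k, (1 - (vertexAngle k l).cos) ^ (s - 1)
      = ∑ l ∈ Ico 1 k, (1 - Real.cos (2 * π * l / k)) ^ (s - 1) := by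
  simp only [vertexAngle, Real.Angle.cos_coe]
  rw [Fin.sum_univ_eq_sum_range (fun l : ℕ => (1 - Real.cos (2 * π * l / k)) ^ (s - 1))]
  refine (sum_subset (fun l hl => mem_range.2 (mem_Ico.1 hl).2) fun l hl hl' => ?_).symm
  have hl0 : l = 0 := by simp only [mem_range, mem_Ico] at hl hl'; omega
  simp [hl0, Real.zero_rpow (sub_ne_zero.2 hs)]

lemma pairForce_unitVec {ρ : ℝ} (hρ : 0 < ρ) (m s : ℝ) (θ φ : Real.Angle) :
    (m / ‖ρ • unitVec (θ + φ) - ρ • unitVec θ‖ ^ (4 - 2 * s)) •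
        (ρ • unitVec (θ + φ) - ρ • unitVec θ)
      = (m * ρ ^ (2 * s - 3) * (2 * (1 - φ.cos)) ^ (s - 2)) •
        ((φ.cos - 1) • unitVec θ + φ.sin • unitVec (θ + ↑(π / 2))) := by
  rw [← smul_sub, div_norm_rpow_smul_smul hρ, show 4 - 2 * s = 2 * (2 - s) by ring,
    div_rpow_two_mul (norm_nonneg _), norm_unitVec_add_sub_sq, unitVec_add_sub,
    show 1 - 2 * (2 - s) = 2 * s - 3 by ring, neg_sub]
  ring_nf

lemma sum_pairForce_vertexAngle {k : ℕ} [NeZero k] {ρ : ℝ} (hρ : 0 < ρ) (m : ℝ) {s : ℝ}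
    (hs : s ≠ 1) (θ : Real.Angle) :
    ∑ l : Fin k, (m / ‖ρ • unitVec (θ + vertexAngle k l) - ρ • unitVec θ‖ ^ (4 - 2 * s)) •
        (ρ • unitVec (θ + vertexAngle k l) - ρ • unitVec θ)
      = -((m * ρ ^ (2 * s - 3) * 2 ^ (s - 2) *
          ∑ l ∈ Ico 1 k, (1 - Real.cos (2 * π * l / k)) ^ (s - 1)) • unitVec θ) := by
  simp only [pairForce_unitVec hρ, smul_add, smul_smul, sum_add_distrib, ← sum_smul]
  rw [sum_mul_sin_vertexAngle_eq_zero fun c => m * ρ ^ (2 * s - 3) * (2 * (1 - c)) ^ (s - 2),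
    zero_smul, add_zero, ← neg_smul, ← sum_one_sub_cos_vertexAngle_rpow hs, mul_sum,
    ← sum_neg_distrib]
  congr 1
  refine sum_congr rfl fun l _ => ?_
  have hcos : (vertexAngle k l).cos ≤ 1 := by
    rw [vertexAngle, Real.Angle.cos_coe]; exact Real.cos_le_one _
  have h := mul_two_mul_rpow (sub_nonneg.2 hcos) hs
  linear_combination (-(m * ρ ^ (2 * s - 3))) * h

theorem statement4_general (k : ℕ) (ρ : ℝ) (hρ : 0 < ρ) (m : ℝ)
    (s : ℝ) (hs : s ∈ Set.Ioo (0:ℝ) 1)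
    (b : Fin k → E2)
    (hb : ∀ j : Fin k,
      b j = ρ • (!₂[Real.cos (2*Real.pi*(j:ℝ)/k), Real.sin (2*Real.pi*(j:ℝ)/k)] : E2))
    (mm : Fin k → ℝ) (hm : ∀ j, mm j = m)
    (α : ℝ)
    (hα : α = m / ρ ^ (4 - 2*s) * (Real.Gamma (2-s) / (2 ^ (s+1) * Real.pi * Real.Gamma s)) *
        ∑ l ∈ Finset.Ico 1 k, (1 - Real.cos (2*Real.pi*(l:ℝ)/k)) ^ (s - 1)) :
    ∀ j : Fin k, α • b j = -((Ks s) • ∑ i ∈ Finset.univ \ {j},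
        (mm i / ‖b i - b j‖ ^ (4 - 2*s)) • (b i - b j)) := by
  intro j
  have : NeZero k := ⟨j.pos.ne'⟩
  have hb' : ∀ i, b i = ρ • unitVec (vertexAngle k i) := by
    simpa [unitVec, vertexAngle, Real.Angle.cos_coe, Real.Angle.sin_coe] using hb
  rw [sdiff_singleton_eq_erase, sum_erase _ (by rw [sub_self, smul_zero]),
    ← Equiv.sum_comp (Equiv.addLeft j)]
  simp only [Equiv.coe_addLeft, hm, hb', vertexAngle_add]
  rw [sum_pairForce_vertexAngle hρ m hs.2.ne, hα, smul_neg, neg_neg, smul_smul, smul_smul,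
    ← Ks_mul_two_rpow, show 2 * s - 3 = 1 - (4 - 2 * s) by ring, Real.rpow_sub hρ 1, Real.rpow_one]
  congr 1
  ring

/-- the regular `k`-gon with equal intensities `m` solves the rotating system
with angular speed `α = (m/ρ^{4-2s}) (Γ(2-s)/(2^{s+1} π Γ(s))) Σ_{l=1}^{k-1}(1-cos(2πl/k))^{s-1}`. -/
theorem statement4 (k : ℕ) (hk : 2 ≤ k) (ρ : ℝ) (hρ : 0 < ρ) (m : ℝ)
    (s : ℝ) (hs : s ∈ Set.Ioo (0:ℝ) 1)
    (b : Fin k → E2)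
    (hb : ∀ j : Fin k,
      b j = ρ • (!₂[Real.cos (2*Real.pi*(j:ℝ)/k), Real.sin (2*Real.pi*(j:ℝ)/k)] : E2))
    (mm : Fin k → ℝ) (hm : ∀ j, mm j = m)
    (α : ℝ)
    (hα : α = m / ρ ^ (4 - 2*s) * (Real.Gamma (2-s) / (2 ^ (s+1) * Real.pi * Real.Gamma s)) *
        ∑ l ∈ Finset.Ico 1 k, (1 - Real.cos (2*Real.pi*(l:ℝ)/k)) ^ (s - 1)) :
    ∀ j : Fin k, α • b j = -((Ks s) • ∑ i ∈ Finset.univ \ {j},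
        (mm i / ‖b i - b j‖ ^ (4 - 2*s)) • (b i - b j)) :=
  statement4_general k ρ hρ m s hs b hb mm hm α hα
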